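/- arXiv:2007.11492 — 2 statements merged into one kernel-verified Lean document; each statement's English description precedes it below -/
import Mathlib

section
/- For every natural number ν, ∑_{k=0}^{2ν} (−1)^k · C(2ν+1, k+1) · 2^{−k} · C(2k, k) = (2ν+1) · (1/2)_ν / (1)_ν, with the sum taken over rational (or real) numbers. -/
/-!
Pascal's rule turns the sum into `∑_{m ≤ 2ν} A m` with
`A m = ∑_k C(m,k) C(2k,k) (-1/2)^k`. Since `C(2k,k)` is the coefficient of `t^k` in
`(1+t)^(2k)`, the binomial theorem makes `A m` the coefficient of `t^m` in
`(t - (1+t)^2/2)^m = (-1/2)^m (1+t^2)^m`, which is `C(2j,j)/4^j` for `m = 2j` and `0` for odd `m`.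
Finally `∑_{j ≤ ν} C(2j,j)/4^j = (2ν+1) C(2ν,ν)/4^ν` by induction, and
`C(2ν,ν)/4^ν = (1/2)_ν/(1)_ν`.
-/

open Finset Polynomial

section Semiring

variable {R : Type*} [CommSemiring R]

theorem sum_range_choose_succ_mul (f : ℕ → R) (n : ℕ) :
    ∑ k ∈ range n, (n.choose (k + 1) : R) * f k
      = ∑ m ∈ range n, ∑ k ∈ range (m + 1), (m.choose k : R) * f k := by
  induction n with
  | zero => simp
  | succ n ih =>
    simp only [Nat.choose_succ_succ, Nat.cast_add, add_mul, sum_add_distrib]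
    rw [sum_range_succ (fun k => (n.choose (k + 1) : R) * f k), Nat.choose_succ_self,
      Nat.cast_zero, zero_mul, add_zero, ih,
      sum_range_succ (fun m => ∑ k ∈ range (m + 1), (m.choose k : R) * f k), add_comm]

theorem sum_range_choose_mul_centralBinom_mul_pow_eq_coeff (x : R) (m : ℕ) :
    ∑ k ∈ range (m + 1), (m.choose k : R) * (k.centralBinom * x ^ k)
      = ((C x * (1 + X) ^ 2 + X) ^ m).coeff m := by
  rw [add_pow, finsetSum_coeff]
  refine sum_congr rfl fun k hk => ?_
  have hkm : k ≤ m := Nat.lt_succ_iff.mp (mem_range.mp hk)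
  rw [mul_pow, ← C_pow, ← pow_mul, ← C_eq_natCast, coeff_mul_C, mul_assoc (C _), coeff_C_mul,
    coeff_mul_X_pow', if_pos (Nat.sub_le m k), Nat.sub_sub_self hkm, coeff_one_add_X_pow,
    Nat.centralBinom_eq_two_mul_choose]
  ring

theorem one_add_X_sq_pow_eq_expand (m : ℕ) :
    (1 + X ^ 2 : R[X]) ^ m = expand R 2 ((1 + X) ^ m) := by
  simp

theorem coeff_one_add_X_sq_pow_two_mul (m j : ℕ) :
    ((1 + X ^ 2 : R[X]) ^ m).coeff (2 * j) = m.choose j := by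
  rw [one_add_X_sq_pow_eq_expand, coeff_expand_mul' two_pos, coeff_one_add_X_pow]

theorem coeff_one_add_X_sq_pow_two_mul_add_one (m j : ℕ) :
    ((1 + X ^ 2 : R[X]) ^ m).coeff (2 * j + 1) = 0 := by
  rw [one_add_X_sq_pow_eq_expand, coeff_expand two_pos, if_neg (by omega)]

end Semiring

section Field

variable {K : Type*} [Field K] [CharZero K]

theorem sum_range_choose_mul_centralBinom_mul_neg_half_pow_eq_coeff (m : ℕ) :
    ∑ k ∈ range (m + 1), (m.choose k : K) * (k.centralBinom * (-1 / 2) ^ k)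
      = (-1 / 2) ^ m * ((1 + X ^ 2 : K[X]) ^ m).coeff m := by
  have h : C (-1 / 2 : K) * (1 + X) ^ 2 + X = C (-1 / 2) * (1 + X ^ 2) := by
    have h2 : C (-1 / 2 : K) * 2 = -1 := by
      rw [← C_ofNat, ← C_mul, div_mul_cancel₀ _ two_ne_zero, C_neg, C_1]
    linear_combination X * h2
  rw [sum_range_choose_mul_centralBinom_mul_pow_eq_coeff, h, mul_pow, ← C_pow, coeff_C_mul]

theorem sum_range_two_mul_choose_mul_centralBinom_mul_neg_half_pow (j : ℕ) :
    ∑ k ∈ range (2 * j + 1), ((2 * j).choose k : K) * (k.centralBinom * (-1 / 2) ^ k)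
      = j.centralBinom / 4 ^ j := by
  rw [sum_range_choose_mul_centralBinom_mul_neg_half_pow_eq_coeff, coeff_one_add_X_sq_pow_two_mul,
    Nat.centralBinom_eq_two_mul_choose, pow_mul, show (-1 / 2 : K) ^ 2 = 1 / 4 by norm_num,
    one_div_pow, one_div_mul_eq_div]

theorem sum_range_two_mul_add_one_choose_mul_centralBinom_mul_neg_half_pow (j : ℕ) :
    ∑ k ∈ range (2 * j + 1 + 1), ((2 * j + 1).choose k : K) * (k.centralBinom * (-1 / 2) ^ k)
      = 0 := by
  rw [sum_range_choose_mul_centralBinom_mul_neg_half_pow_eq_coeff, coeff_one_add_X_sq_pow_two_mul_add_one,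
    mul_zero]

theorem sum_range_centralBinom_div_four_pow (n : ℕ) :
    ∑ j ∈ range (n + 1), (j.centralBinom : K) / 4 ^ j = (2 * n + 1) * n.centralBinom / 4 ^ n := by
  induction n with
  | zero => simp
  | succ n ih =>
    have h : ((n : K) + 1) * (n + 1).centralBinom = 2 * (2 * n + 1) * n.centralBinom := by
      exact_mod_cast Nat.succ_mul_centralBinom_succ n
    rw [sum_range_succ, ih, pow_succ]
    field_simp
    push_cast
    linear_combination -2 * h

theorem sum_range_two_mul_add_one_choose_succ_mul_centralBinom_mul_neg_half_pow (n : ℕ) :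
    ∑ k ∈ range (2 * n + 1), ((2 * n + 1).choose (k + 1) : K) * (k.centralBinom * (-1 / 2) ^ k)
      = (2 * n + 1) * n.centralBinom / 4 ^ n := by
  rw [sum_range_choose_succ_mul, ← sum_range_centralBinom_div_four_pow]
  induction n with
  | zero => simp
  | succ n ih =>
    rw [show 2 * (n + 1) + 1 = 2 * n + 1 + 1 + 1 by ring, sum_range_succ, sum_range_succ, ih,
      sum_range_two_mul_add_one_choose_mul_centralBinom_mul_neg_half_pow, add_zero,
      show 2 * n + 1 + 1 = 2 * (n + 1) by ring,
      sum_range_two_mul_choose_mul_centralBinom_mul_neg_half_pow, ← sum_range_succ]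

theorem ascPochhammer_eval_half_mul_four_pow (n : ℕ) :
    (ascPochhammer K n).eval (1 / 2) * 4 ^ n = n.centralBinom * n.factorial := by
  induction n with
  | zero => simp
  | succ n ih =>
    have h : ((n : K) + 1) * (n + 1).centralBinom = 2 * (2 * n + 1) * n.centralBinom := by
      exact_mod_cast Nat.succ_mul_centralBinom_succ n
    rw [ascPochhammer_succ_right, eval_mul, eval_add, eval_X, eval_natCast, Nat.factorial_succ]
    push_cast
    linear_combination (2 + 4 * (n : K)) * ih - (n.factorial : K) * h

end Field

/-- Identity (3.3): the even case of Theorem 2.1 with `i = 1`,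
equivalent to Riordan's identity (1.6). -/
theorem riordan_even_pochhammer (ν : ℕ) :
    ∑ k ∈ Finset.range (2 * ν + 1),
      (-1 : ℚ) ^ k * ((2 * ν + 1).choose (k + 1)) * ((2 * k).choose k) / 2 ^ k
      = (2 * ν + 1) * (ascPochhammer ℚ ν).eval (1 / 2) / (ascPochhammer ℚ ν).eval 1 := by
  have hsummand (k : ℕ) : (-1 : ℚ) ^ k * ((2 * ν + 1).choose (k + 1)) * ((2 * k).choose k) / 2 ^ k
      = ((2 * ν + 1).choose (k + 1) : ℚ) * (k.centralBinom * (-1 / 2) ^ k) := by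
    rw [Nat.centralBinom_eq_two_mul_choose, div_pow]
    ring
  have hhalf : (ascPochhammer ℚ ν).eval (1 / 2) = ν.centralBinom * ν.factorial / 4 ^ ν :=
    eq_div_of_mul_eq (by positivity) (ascPochhammer_eval_half_mul_four_pow ν)
  rw [sum_congr rfl fun k _ => hsummand k,
    sum_range_two_mul_add_one_choose_succ_mul_centralBinom_mul_neg_half_pow, hhalf,
    ascPochhammer_eval_one]
  field_simp
end

section
/- For every natural number ν, ∑_{k=0}^{2ν+1} (−1)^k · C(2ν+4, k+3) · 2^{−k} · C(2k, k) = (1/5) · (8ν+15) · (5/2)_ν / (1)_ν, with the sum taken over rational (or real) numbers. -/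
/-!
Write `S i n = ∑ₖ (-1)^k C(n, k+i) C(2k, k) / 2^k` (`binomSum i n`); the left-hand side is
`S 3 (2ν+4)`. Zeilberger's algorithm gives `(n+2) S 0 (n+2) = (n+1) S 0 n`, so `S 0` vanishes at
odd arguments and `S 0 (2m) = (1/2)_m / m!`. Pascal's rule `S (i+1) (n+1) = S (i+1) n + S i n`
then gives, by induction on `m`, `S i (2m) = p_i(m) (1/2)_m / m!` with `p_1 = 2m`,
`p_2 = 2m(4m-1)/3` and `p_3 = 4m(m-1)(8m-1)/15`. At `m = ν + 2` the shift
`(1/2)_{ν+2} = (3/4) (5/2)_ν` turns this into the right-hand side.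
-/

open Finset Polynomial
open scoped Nat

section CastChoose

variable {R : Type*} [Ring R]

theorem Nat.cast_choose_succ_right_mul (n k : ℕ) :
    (n.choose (k + 1) : R) * (k + 1) = n.choose k * (n - k) := by
  rcases le_or_gt k n with h | h
  · have := congrArg (Nat.cast (R := R)) (Nat.choose_succ_right_eq n k)
    push_cast [Nat.cast_sub h] at this
    exact this
  · simp [Nat.choose_eq_zero_of_lt h, Nat.choose_eq_zero_of_lt (h.trans (Nat.lt_succ_self k))]

theorem Nat.cast_choose_mul_succ (n k : ℕ) :
    (n.choose k : R) * (n + 1) = (n + 1).choose k * (n + 1 - k) := by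
  rcases le_or_gt k (n + 1) with h | h
  · have := congrArg (Nat.cast (R := R)) (Nat.choose_mul_succ_eq n k)
    push_cast [Nat.cast_sub h] at this
    exact this
  · simp [Nat.choose_eq_zero_of_lt h, Nat.choose_eq_zero_of_lt (Nat.lt_of_succ_lt h)]

theorem Nat.cast_succ_mul_centralBinom_succ (k : ℕ) :
    (k + 1 : R) * (k + 1).centralBinom = 2 * (2 * k + 1) * k.centralBinom := by
  exact_mod_cast congrArg (Nat.cast (R := R)) (Nat.succ_mul_centralBinom_succ k)

end CastChoose

section Field

variable {K : Type*} [Field K]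

noncomputable def pochhammerRatio (a : K) (n : ℕ) : K :=
  (ascPochhammer K n).eval a / (ascPochhammer K n).eval 1

def binomTerm (i n k : ℕ) : K :=
  (-1) ^ k * n.choose (k + i) * k.centralBinom / 2 ^ k

def binomSum (i n : ℕ) : K :=
  ∑ k ∈ range (n + 1), binomTerm i n k

@[simp]
theorem pochhammerRatio_zero (a : K) : pochhammerRatio a 0 = 1 := by
  simp [pochhammerRatio]

theorem sum_range_binomTerm {i n N : ℕ} (h : n + 1 ≤ N + i) :
    ∑ k ∈ range N, binomTerm (K := K) i n k = binomSum i n := by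
  have hzero : ∀ k ≥ n + 1 - i, binomTerm (K := K) i n k = 0 := fun k hk => by
    simp [binomTerm, Nat.choose_eq_zero_of_lt (show n < k + i by omega)]
  rw [binomSum, eventually_constant_sum hzero (n := N) (by omega),
    eventually_constant_sum hzero (n := n + 1) (by omega)]

theorem binomTerm_succ_succ (i n k : ℕ) :
    binomTerm (K := K) (i + 1) (n + 1) k = binomTerm (i + 1) n k + binomTerm i n k := by
  rw [binomTerm, ← add_assoc, Nat.choose_succ_succ', binomTerm, binomTerm, add_assoc]
  push_cast
  ring

theorem binomSum_succ_succ (i n : ℕ) :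
    binomSum (K := K) (i + 1) (n + 1) = binomSum (i + 1) n + binomSum i n := by
  rw [← sum_range_binomTerm (i := i + 1) (n := n + 1) (N := n + 1) (by omega), binomSum, binomSum,
    ← sum_add_distrib]
  exact sum_congr rfl fun k _ => binomTerm_succ_succ i n k

theorem binomSum_succ_zero (i : ℕ) : binomSum (K := K) (i + 1) 0 = 0 := by
  simp [binomSum, binomTerm]

variable [CharZero K]

theorem pochhammerRatio_succ (a : K) (n : ℕ) :
    pochhammerRatio a (n + 1) * (n + 1) = pochhammerRatio a n * (a + n) := by
  have := Nat.cast_ne_zero (R := K).mpr n.factorial_ne_zero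
  have := Nat.cast_add_one_ne_zero (R := K) n
  rw [pochhammerRatio, pochhammerRatio, ascPochhammer_eval_one, ascPochhammer_eval_one,
    ascPochhammer_succ_eval, Nat.factorial_succ]
  push_cast
  field_simp

theorem pochhammerRatio_succ_left (a : K) (n : ℕ) :
    pochhammerRatio a (n + 1) * (n + 1) = a * pochhammerRatio (a + 1) n := by
  have := Nat.cast_ne_zero (R := K).mpr n.factorial_ne_zero
  have := Nat.cast_add_one_ne_zero (R := K) n
  rw [pochhammerRatio, pochhammerRatio, ascPochhammer_eval_one, ascPochhammer_eval_one,
    ascPochhammer_succ_left, eval_mul, eval_X, eval_comp, eval_add, eval_X, eval_one,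
    Nat.factorial_succ]
  push_cast
  field_simp

-- The certificate `k ^ 2 * binomTerm 0 (n + 2) k` is the output of Zeilberger's algorithm.
theorem binomTerm_zero_telescoping (n k : ℕ) :
    ((n : K) + 2) ^ 2 * binomTerm 0 (n + 2) k - ((n : K) + 1) * (n + 2) * binomTerm 0 n k
      = (k : K) ^ 2 * binomTerm 0 (n + 2) k - ((k : K) + 1) ^ 2 * binomTerm 0 (n + 2) (k + 1) := by
  have hright := Nat.cast_choose_succ_right_mul (R := K) (n + 2) k
  have hup := Nat.cast_choose_mul_succ (R := K) n k
  have hup' := Nat.cast_choose_mul_succ (R := K) (n + 1) k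
  have hcentral := Nat.cast_succ_mul_centralBinom_succ (R := K) k
  push_cast at hright hup'
  have h2 : (2 : K) ^ k ≠ 0 := pow_ne_zero _ two_ne_zero
  simp only [binomTerm, add_zero, pow_succ]
  field_simp
  linear_combination (-((k : K) + 1) * (k + 1).centralBinom) * hright
    - (((n + 2).choose k : K) * (n + 2 - k)) * hcentral
    - (2 * ((n : K) + 2) * k.centralBinom) * hup
    - (2 * k.centralBinom * ((n : K) + 1 - k)) * hup'

theorem binomSum_zero_recurrence (n : ℕ) :
    ((n : K) + 2) * binomSum 0 (n + 2) = (n + 1) * binomSum 0 n := by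
  let G : ℕ → K := fun k => (k : K) ^ 2 * binomTerm 0 (n + 2) k
  have htele : ∑ k ∈ range (n + 3),
      (((n : K) + 2) ^ 2 * binomTerm 0 (n + 2) k - ((n : K) + 1) * (n + 2) * binomTerm 0 n k)
      = G 0 - G (n + 3) := by
    rw [← sum_range_sub']
    refine sum_congr rfl fun k _ => ?_
    simp only [G, binomTerm_zero_telescoping, Nat.cast_succ]
  have hG : G 0 - G (n + 3) = 0 := by
    simp [G, binomTerm]
  rw [sum_sub_distrib, ← mul_sum, ← mul_sum, sum_range_binomTerm (by omega),
    sum_range_binomTerm (by omega), hG] at htele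
  have hn : (n : K) + 2 ≠ 0 := by exact_mod_cast Nat.succ_ne_zero (n + 1)
  apply mul_left_cancel₀ hn
  linear_combination htele

theorem pochhammerRatio_half_succ (m : ℕ) :
    (2 * m + 2) * pochhammerRatio (1 / 2 : K) (m + 1)
      = (2 * m + 1) * pochhammerRatio (1 / 2) m := by
  linear_combination 2 * pochhammerRatio_succ (1 / 2 : K) m

theorem binomSum_zero_two_mul_add_one (m : ℕ) : binomSum (K := K) 0 (2 * m + 1) = 0 := by
  induction m with
  | zero => norm_num [binomSum, binomTerm, sum_range_succ, Nat.centralBinom_eq_two_mul_choose]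
  | succ m ih =>
    have hrec := binomSum_zero_recurrence (K := K) (2 * m + 1)
    rw [ih, mul_zero] at hrec
    have hne : ((2 * m + 1 : ℕ) : K) + 2 ≠ 0 := by exact_mod_cast Nat.succ_ne_zero (2 * m + 2)
    rw [show 2 * (m + 1) + 1 = 2 * m + 1 + 2 by ring]
    exact (mul_eq_zero.mp hrec).resolve_left hne

theorem binomSum_zero_two_mul (m : ℕ) :
    binomSum (K := K) 0 (2 * m) = pochhammerRatio (1 / 2) m := by
  induction m with
  | zero => simp [binomSum, binomTerm]
  | succ m ih =>
    have hrec := binomSum_zero_recurrence (K := K) (2 * m)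
    rw [ih] at hrec
    push_cast at hrec
    have hne : (2 * m + 2 : K) ≠ 0 := by exact_mod_cast Nat.succ_ne_zero (2 * m + 1)
    rw [mul_add_one 2 m]
    exact mul_left_cancel₀ hne (by linear_combination hrec - pochhammerRatio_half_succ (K := K) m)

theorem binomSum_succ_two_mul_of_recurrence {i : ℕ} {p q : ℕ → K}
    (hq : ∀ m, binomSum i (2 * m) + binomSum i (2 * m + 1)
      = q m * pochhammerRatio (1 / 2) m)
    (hp0 : p 0 = 0) (hp : ∀ m : ℕ, p (m + 1) * (2 * m + 1) = (2 * m + 2) * (p m + q m)) (m : ℕ) :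
    binomSum (i + 1) (2 * m) = p m * pochhammerRatio (1 / 2) m := by
  induction m with
  | zero => simp [binomSum_succ_zero, hp0]
  | succ m ih =>
    have hne : (2 * m + 2 : K) ≠ 0 := by exact_mod_cast Nat.succ_ne_zero (2 * m + 1)
    rw [mul_add_one 2 m, binomSum_succ_succ, binomSum_succ_succ, add_assoc, ih, hq]
    refine mul_left_cancel₀ hne ?_
    linear_combination (-pochhammerRatio (1 / 2 : K) m) * hp m
      - p (m + 1) * pochhammerRatio_half_succ (K := K) m

theorem binomSum_one_two_mul (m : ℕ) :
    binomSum (K := K) 1 (2 * m) = 2 * m * pochhammerRatio (1 / 2) m :=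
  binomSum_succ_two_mul_of_recurrence (p := fun m : ℕ => (2 * m : K)) (q := fun _ => 1)
    (fun m => by rw [binomSum_zero_two_mul, binomSum_zero_two_mul_add_one]; ring)
    (by simp) (fun m => by push_cast; ring) m

theorem binomSum_two_two_mul (m : ℕ) :
    binomSum (K := K) 2 (2 * m) = 2 * m * (4 * m - 1) / 3 * pochhammerRatio (1 / 2) m :=
  binomSum_succ_two_mul_of_recurrence (p := fun m : ℕ => (2 * m * (4 * m - 1) / 3 : K))
    (q := fun m : ℕ => (4 * m + 1 : K))
    (fun m => by rw [binomSum_succ_succ, binomSum_one_two_mul, binomSum_zero_two_mul]; ring)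
    (by simp) (fun m => by push_cast; ring) m

theorem binomSum_three_two_mul (m : ℕ) :
    binomSum (K := K) 3 (2 * m)
      = 4 * m * (m - 1) * (8 * m - 1) / 15 * pochhammerRatio (1 / 2) m :=
  binomSum_succ_two_mul_of_recurrence (p := fun m : ℕ => (4 * m * (m - 1) * (8 * m - 1) / 15 : K))
    (q := fun m : ℕ => (2 * m * (8 * m + 1) / 3 : K))
    (fun m => by rw [binomSum_succ_succ, binomSum_two_two_mul, binomSum_one_two_mul]; ring)
    (by simp) (fun m => by push_cast; ring) m

end Field

/-- Identity (3.8): the odd case of Theorem 2.1 with `i = 3`. -/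
theorem theorem_2_1_odd_i_three (ν : ℕ) :
    ∑ k ∈ Finset.range (2 * ν + 2),
      (-1 : ℚ) ^ k * ((2 * ν + 4).choose (k + 3)) * ((2 * k).choose k) / 2 ^ k
      = (1 / 5) * (8 * ν + 15) * (ascPochhammer ℚ ν).eval (5 / 2)
          / (ascPochhammer ℚ ν).eval 1 := by
  have hsum : ∑ k ∈ range (2 * ν + 2),
      (-1 : ℚ) ^ k * ((2 * ν + 4).choose (k + 3)) * ((2 * k).choose k) / 2 ^ k
      = binomSum 3 (2 * (ν + 2)) := sum_range_binomTerm (by omega)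
  have h₁ := pochhammerRatio_succ_left (1 / 2 : ℚ) (ν + 1)
  have h₂ := pochhammerRatio_succ_left (3 / 2 : ℚ) ν
  norm_num at h₁ h₂
  rw [mul_div_assoc, hsum, binomSum_three_two_mul]
  change _ = _ * pochhammerRatio (5 / 2 : ℚ) ν
  push_cast
  linear_combination (4 * ((ν : ℚ) + 1) * (8 * ν + 15) / 15) * h₁
    + (2 * (8 * (ν : ℚ) + 15) / 15) * h₂
end
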